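/- Let τ > 0, C₅ > 0, β > 0, E > 0 with 2κ₂ > Eβ, ξ > 1, a₁, a₂ ∈ ℝ, κ₁ ≥ 0, and M as above. Define φ₅(x,y) = C₅(E|x|^β − y²|x|^{β+1}) on X₅ = {(x,y) : x ≤ −1, |y| ≤ ξ^{-1}√(E/|x|)}. Then φ₅ ≥ 0 on X₅ (indeed E|x|^β − y²|x|^{β+1} ≥ E(1 − ξ^{-2})|x|^β > 0 there), φ₅ → ∞ as |x| → ∞ in X₅, and there exist R > 0 and c > 0 such that for (x,y) ∈ X₅ with x²+y² ≥ R², τ(Mφ₅)(x,y) ≤ −c|x|^{β+1}; in particular Mφ₅ → −∞ as x²+y² → ∞ in X₅. -/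

import Mathlib

/-!
On `x < 0` write `s = -x`, so that `φ₅ = C₅ (E s^β - y² s^{β+1})` and a direct computation gives
`τ Mφ₅ = C₅ s^{β-2} P(s, y)` for an explicit polynomial `P`. On `X₅` we have `y² s ≤ ξ⁻² E`,
hence `φ₅ ≥ C₅ E (1 - ξ⁻²) s^β`. The same bound makes every term of `P` other than
`(Eβ - 2κ₂) s³` and `-2 a₂ y s³` of order at most `s²`, and AM-GM absorbs the latter into a quarter
of the leading term, which is negative because `2κ₂ > Eβ`. So `P ≤ -(2κ₂ - Eβ) s³ / 2` for
large `s`, i.e. `τ Mφ₅ ≤ -c s^{β+1}`.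
-/

/-- Partial derivative in `x` of a function of two real variables. -/
noncomputable def pdx (f : ℝ → ℝ → ℝ) (x y : ℝ) : ℝ := deriv (fun x' => f x' y) x

/-- Partial derivative in `y` of a function of two real variables. -/
noncomputable def pdy (f : ℝ → ℝ → ℝ) (x y : ℝ) : ℝ := deriv (fun y' => f x y') y

/-- The generator `M` of the planar diffusion, in real coordinates. -/
noncomputable def Mop (τ a₁ a₂ κ₁ κ₂ : ℝ) (f : ℝ → ℝ → ℝ) (x y : ℝ) : ℝ :=
  -(1 / τ) * (x ^ 2 - y ^ 2 - a₁) * pdx f x y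
    - (1 / τ) * (2 * x * y - a₂) * pdy f x y
    + (κ₁ / τ) * pdx (fun x' y' => pdx f x' y') x y
    + (κ₂ / τ) * pdy (fun x' y' => pdy f x' y') x y

open Real Filter

lemma hasDerivAt_neg_rpow (p : ℝ) {x : ℝ} (hx : x < 0) :
    HasDerivAt (fun x' : ℝ => (-x') ^ p) (-(p * (-x) ^ (p - 1))) x :=
  ((hasDerivAt_rpow_const (Or.inl (neg_ne_zero.2 hx.ne))).comp x
    (hasDerivAt_neg x)).congr_deriv (by ring)

noncomputable def phi5 (C β E : ℝ) (x y : ℝ) : ℝ :=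
  C * (E * |x| ^ β - y ^ 2 * |x| ^ (β + 1))

section Derivatives

variable (C β E : ℝ) {x : ℝ} (y : ℝ)

lemma pdx_phi5 (hx : x < 0) :
    pdx (phi5 C β E) x y = C * (-(E * β * (-x) ^ (β - 1)) + (β + 1) * y ^ 2 * (-x) ^ β) := by
  have hloc : (fun x' => phi5 C β E x' y) =ᶠ[nhds x]
      fun x' => C * (E * (-x') ^ β - y ^ 2 * (-x') ^ (β + 1)) := by
    filter_upwards [Iio_mem_nhds hx] with z hz
    rw [phi5, abs_of_neg hz]
  have hd : HasDerivAt (fun x' => C * (E * (-x') ^ β - y ^ 2 * (-x') ^ (β + 1))) _ x :=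
    (((hasDerivAt_neg_rpow β hx).const_mul E).sub
      ((hasDerivAt_neg_rpow (β + 1) hx).const_mul (y ^ 2))).const_mul C
  rw [pdx, hloc.deriv_eq, hd.deriv, add_sub_cancel_right]
  ring

lemma pdx_pdx_phi5 (hx : x < 0) :
    pdx (fun x' y' => pdx (phi5 C β E) x' y') x y
      = C * (E * β * (β - 1) * (-x) ^ (β - 2) - β * (β + 1) * y ^ 2 * (-x) ^ (β - 1)) := by
  have hloc : (fun x' => pdx (phi5 C β E) x' y) =ᶠ[nhds x]
      fun x' => C * (-(E * β * (-x') ^ (β - 1)) + (β + 1) * y ^ 2 * (-x') ^ β) := by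
    filter_upwards [Iio_mem_nhds hx] with z hz
    exact pdx_phi5 C β E y hz
  have hd : HasDerivAt
      (fun x' => C * (-(E * β * (-x') ^ (β - 1)) + (β + 1) * y ^ 2 * (-x') ^ β)) _ x :=
    ((((hasDerivAt_neg_rpow (β - 1) hx).const_mul (E * β)).neg).add
      ((hasDerivAt_neg_rpow β hx).const_mul ((β + 1) * y ^ 2))).const_mul C
  rw [pdx, hloc.deriv_eq, hd.deriv, show β - 1 - 1 = β - 2 by ring]
  ring

variable (x)

lemma pdy_phi5 : pdy (phi5 C β E) x y = -(2 * C * y * |x| ^ (β + 1)) := by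
  have hd : HasDerivAt (phi5 C β E x) _ y :=
    (((hasDerivAt_pow 2 y).mul_const (|x| ^ (β + 1))).const_sub (E * |x| ^ β)).const_mul C
  rw [pdy, hd.deriv]
  push_cast
  ring

lemma pdy_pdy_phi5 : pdy (fun x' y' => pdy (phi5 C β E) x' y') x y = -(2 * C * |x| ^ (β + 1)) := by
  have hd : HasDerivAt (fun y' => -(2 * C * y' * |x| ^ (β + 1))) _ y :=
    (((hasDerivAt_id y).const_mul (2 * C)).mul_const (|x| ^ (β + 1))).neg
  change deriv (fun y' => pdy (phi5 C β E) x y') y = _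
  simp only [pdy_phi5]
  rw [hd.deriv]
  ring

end Derivatives

noncomputable def phi5GeneratorPoly (β E a₁ a₂ κ₁ κ₂ s y : ℝ) : ℝ :=
  (E * β - 2 * κ₂) * s ^ 3 - (β + 5) * y ^ 2 * s ^ 4
    - (y ^ 2 + a₁) * (E * β * s - (β + 1) * y ^ 2 * s ^ 2)
    - 2 * a₂ * y * s ^ 3 + κ₁ * (E * β * (β - 1) - β * (β + 1) * y ^ 2 * s)

lemma tau_mul_Mop_phi5 (τ C β E a₁ a₂ κ₁ κ₂ : ℝ) (hτ : τ ≠ 0) {x : ℝ} (hx : x < 0) (y : ℝ) :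
    τ * Mop τ a₁ a₂ κ₁ κ₂ (phi5 C β E) x y
      = C * (-x) ^ (β - 2) * phi5GeneratorPoly β E a₁ a₂ κ₁ κ₂ (-x) y := by
  have hpow (n : ℕ) (p : ℝ) (hp : p = β - 2 + n) : (-x) ^ p = (-x) ^ (β - 2) * (-x) ^ n := by
    rw [hp, rpow_add_natCast (neg_ne_zero.2 hx.ne)]
  rw [Mop, pdx_phi5 C β E y hx, pdy_phi5, pdx_pdx_phi5 C β E y hx, pdy_pdy_phi5, abs_of_neg hx,
    hpow 3 (β + 1) (by push_cast; ring), hpow 1 (β - 1) (by push_cast; ring),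
    hpow 2 β (by push_cast; ring), phi5GeneratorPoly]
  field_simp
  ring

lemma neg_two_mul_le_add_sq {δ : ℝ} (hδ : 0 < δ) (a : ℝ) : -(2 * a) ≤ δ / 4 + 4 / δ * a ^ 2 := by
  have h : 0 ≤ (δ / 2 + 2 * a) ^ 2 / δ := by positivity
  have e : (δ / 2 + 2 * a) ^ 2 / δ = δ / 4 + 4 / δ * a ^ 2 + 2 * a := by field_simp; ring
  linarith

lemma neg_sq_add_mul_sub_le {β E a u y : ℝ} (hβ : 0 < β) (hu : 0 ≤ u) (huE : u ≤ E)
    (hy : y ^ 2 ≤ E) :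
    -((y ^ 2 + a) * (E * β - (β + 1) * u)) ≤ (E + |a|) * (E * β + (β + 1) * E) := by
  have h1 : |y ^ 2 + a| ≤ E + |a| :=
    (abs_add_le _ _).trans (by rw [abs_of_nonneg (sq_nonneg y)]; linarith)
  have h2 : |E * β - (β + 1) * u| ≤ E * β + (β + 1) * E :=
    abs_le.2 ⟨by nlinarith, by nlinarith⟩
  calc _ ≤ |(y ^ 2 + a) * (E * β - (β + 1) * u)| := neg_le_abs _
    _ = |y ^ 2 + a| * |E * β - (β + 1) * u| := abs_mul _ _
    _ ≤ _ := mul_le_mul h1 h2 (abs_nonneg _) (by linarith [abs_nonneg a, hu.trans huE])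

lemma exists_phi5GeneratorPoly_le_cubic {β E κ₁ κ₂ : ℝ} (hβ : 0 < β) (hκ₁ : 0 ≤ κ₁)
    (hEβ : E * β < 2 * κ₂) (a₁ a₂ : ℝ) :
    ∃ A, ∀ s y, 1 ≤ s → y ^ 2 * s ≤ E →
      phi5GeneratorPoly β E a₁ a₂ κ₁ κ₂ s y
        ≤ -(3 / 4 * (2 * κ₂ - E * β)) * s ^ 3 + A * s ^ 2 := by
  set δ := 2 * κ₂ - E * β
  have hδ : 0 < δ := by simp only [δ]; linarith
  set B := (E + |a₁|) * (E * β + (β + 1) * E)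
  refine ⟨B + 4 / δ * a₂ ^ 2 * E + κ₁ * (E * β * (β + 1)), fun s y hs hys => ?_⟩
  set u := y ^ 2 * s
  have hu : 0 ≤ u := by positivity
  have hy : y ^ 2 ≤ E := by nlinarith [sq_nonneg y]
  have hE : 0 ≤ E := hu.trans hys
  have h_a₁ : -((y ^ 2 + a₁) * (E * β - (β + 1) * u)) * s ≤ B * s ^ 2 :=
    (mul_le_mul_of_nonneg_right (neg_sq_add_mul_sub_le hβ hu hys hy) (by linarith)).trans
      (by gcongr; nlinarith)
  -- AM-GM trades the drift term `a₂ y s³` for `δ s³ / 4` plus a term of lower order in `s`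
  have h_a₂ : -(2 * (a₂ * y)) * s ^ 3 ≤ δ / 4 * s ^ 3 + 4 / δ * a₂ ^ 2 * E * s ^ 2 := by
    have hu2 : 4 / δ * a₂ ^ 2 * u * s ^ 2 ≤ 4 / δ * a₂ ^ 2 * E * s ^ 2 := by gcongr
    calc _ ≤ (δ / 4 + 4 / δ * (a₂ * y) ^ 2) * s ^ 3 :=
          mul_le_mul_of_nonneg_right (neg_two_mul_le_add_sq hδ (a₂ * y)) (by positivity)
      _ = δ / 4 * s ^ 3 + 4 / δ * a₂ ^ 2 * u * s ^ 2 := by simp only [u]; ring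
      _ ≤ _ := by linarith
  have h_κ₁ : κ₁ * (E * β * (β - 1) - β * (β + 1) * u) ≤ κ₁ * (E * β * (β + 1)) * s ^ 2 := by
    have : 0 ≤ E * β * 2 + β * (β + 1) * u := by positivity
    calc _ ≤ κ₁ * (E * β * (β + 1)) := by gcongr; linarith
      _ ≤ _ := le_mul_of_one_le_right (by positivity) (by nlinarith)
  have hexpand : phi5GeneratorPoly β E a₁ a₂ κ₁ κ₂ s y
      = -δ * s ^ 3 - (β + 5) * u * s ^ 3 - ((y ^ 2 + a₁) * (E * β - (β + 1) * u)) * s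
        - 2 * (a₂ * y) * s ^ 3 + κ₁ * (E * β * (β - 1) - β * (β + 1) * u) := by
    simp only [phi5GeneratorPoly, δ, u]; ring
  have h_u : 0 ≤ (β + 5) * u * s ^ 3 := by positivity
  rw [hexpand]
  linarith

lemma exists_phi5GeneratorPoly_le {β E κ₁ κ₂ : ℝ} (hβ : 0 < β) (hκ₁ : 0 ≤ κ₁)
    (hEβ : E * β < 2 * κ₂) (a₁ a₂ : ℝ) :
    ∃ s₀, ∀ s y, 1 ≤ s → s₀ ≤ s → y ^ 2 * s ≤ E →
      phi5GeneratorPoly β E a₁ a₂ κ₁ κ₂ s y ≤ -((2 * κ₂ - E * β) / 2) * s ^ 3 := by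
  obtain ⟨A, hA⟩ := exists_phi5GeneratorPoly_le_cubic hβ hκ₁ hEβ a₁ a₂
  have hδ : 0 < 2 * κ₂ - E * β := by linarith
  refine ⟨4 * A / (2 * κ₂ - E * β), fun s y hs hs₀ hys => ?_⟩
  have hAs : 4 * A ≤ s * (2 * κ₂ - E * β) := (div_le_iff₀ hδ).1 hs₀
  have : A * s ^ 2 ≤ (2 * κ₂ - E * β) / 4 * s ^ 3 := by
    nlinarith [mul_le_mul_of_nonneg_right hAs (sq_nonneg s)]
  linarith [hA s y hs hys]

lemma sq_mul_abs_le_of_abs_le_mul_sqrt {E c x y : ℝ} (hE : 0 ≤ E) (hx : x ≠ 0)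
    (hy : |y| ≤ c * √(E / |x|)) : y ^ 2 * |x| ≤ c ^ 2 * E := by
  have h := pow_le_pow_left₀ (abs_nonneg y) hy 2
  rw [sq_abs, mul_pow, sq_sqrt (by positivity)] at h
  calc y ^ 2 * |x| ≤ c ^ 2 * (E / |x|) * |x| := mul_le_mul_of_nonneg_right h (abs_nonneg x)
    _ = c ^ 2 * E := by field_simp

lemma le_abs_of_sq_add_le_sq_add_sq {E S x y : ℝ} (hy : y ^ 2 ≤ E) (h : S ^ 2 + E ≤ x ^ 2 + y ^ 2) :
    S ≤ |x| :=
  (le_abs_self S).trans (sq_le_sq.1 (by linarith))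

lemma mul_one_sub_mul_rpow_le {E k β x y : ℝ} (hx : x ≠ 0) (h : y ^ 2 * |x| ≤ k * E) :
    E * (1 - k) * |x| ^ β ≤ E * |x| ^ β - y ^ 2 * |x| ^ (β + 1) := by
  rw [rpow_add_one (abs_ne_zero.2 hx)]
  nlinarith [mul_le_mul_of_nonneg_right h (rpow_nonneg (abs_nonneg x) β)]

lemma exists_tau_mul_Mop_phi5_le {τ C β E a₁ a₂ κ₁ κ₂ : ℝ} (hτ : τ ≠ 0) (hC : 0 < C)
    (hβ : 0 < β) (hE : 0 < E) (hκ₁ : 0 ≤ κ₁) (hEβ : E * β < 2 * κ₂) :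
    ∃ R, 0 < R ∧ ∃ c, 0 < c ∧ ∀ x y, x ≤ -1 → y ^ 2 * |x| ≤ E → R ^ 2 ≤ x ^ 2 + y ^ 2 →
      τ * Mop τ a₁ a₂ κ₁ κ₂ (phi5 C β E) x y ≤ -c * |x| ^ (β + 1) := by
  obtain ⟨s₀, hs₀⟩ := exists_phi5GeneratorPoly_le hβ hκ₁ hEβ a₁ a₂
  have hδ : 0 < 2 * κ₂ - E * β := by linarith
  refine ⟨√(s₀ ^ 2 + E), by positivity, C * ((2 * κ₂ - E * β) / 2), by positivity,
    fun x y hx hyx hR => ?_⟩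
  have hx0 : x < 0 := by linarith
  have hs : 1 ≤ -x := by linarith
  rw [abs_of_neg hx0] at hyx ⊢
  have hs₀x : s₀ ≤ -x := by
    rw [← abs_of_neg hx0]
    refine le_abs_of_sq_add_le_sq_add_sq (E := E) ?_ (by rwa [sq_sqrt (by positivity)] at hR)
    nlinarith [sq_nonneg y]
  rw [tau_mul_Mop_phi5 τ C β E a₁ a₂ κ₁ κ₂ hτ hx0]
  calc C * (-x) ^ (β - 2) * phi5GeneratorPoly β E a₁ a₂ κ₁ κ₂ (-x) y
      ≤ C * (-x) ^ (β - 2) * (-((2 * κ₂ - E * β) / 2) * (-x) ^ 3) :=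
        mul_le_mul_of_nonneg_left (hs₀ _ y hs hs₀x hyx) (by positivity)
    _ = -(C * ((2 * κ₂ - E * β) / 2)) * (-x) ^ (β + 1) := by
        rw [show β + 1 = β - 2 + (3 : ℕ) by push_cast; ring,
          rpow_add_natCast (by linarith : -x ≠ 0)]
        ring

lemma exists_forall_le_of_mul_le_neg_rpow {g : ℝ → ℝ → ℝ} {τ c β E R : ℝ} (hτ : 0 < τ)
    (hc : 0 < c) (hβ : 0 ≤ β)
    (hg : ∀ x y, x ≤ -1 → y ^ 2 * |x| ≤ E → R ^ 2 ≤ x ^ 2 + y ^ 2 → τ * g x y ≤ -c * |x| ^ (β + 1))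
    (K : ℝ) : ∃ R', ∀ x y, x ≤ -1 → y ^ 2 * |x| ≤ E → R' ≤ x ^ 2 + y ^ 2 → g x y ≤ K := by
  refine ⟨max |R| (τ * |K| / c) ^ 2 + E, fun x y hx hyx h => ?_⟩
  have hx1 : 1 ≤ |x| := by rw [abs_of_neg (by linarith)]; linarith
  have hS := le_abs_of_sq_add_le_sq_add_sq ((le_mul_of_one_le_right (sq_nonneg y) hx1).trans hyx) h
  have hR : R ^ 2 ≤ x ^ 2 + y ^ 2 := by
    linarith [sq_le_sq.2 ((le_max_left _ _).trans hS), sq_nonneg y]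
  have hgK : τ * g x y ≤ τ * K := calc
    τ * g x y ≤ -c * |x| ^ (β + 1) := hg x y hx hyx hR
    _ ≤ -c * |x| := by
        have := self_le_rpow_of_one_le hx1 (by linarith : 1 ≤ β + 1)
        nlinarith
    _ ≤ -c * (τ * |K| / c) := by nlinarith [le_max_right |R| (τ * |K| / c)]
    _ = -(τ * |K|) := by field_simp
    _ ≤ τ * K := by nlinarith [neg_abs_le K]
  exact le_of_mul_le_mul_left hgK hτ

theorem LF5_general (τ C₅ β E ξ a₁ a₂ κ₁ κ₂ : ℝ) (hτ : 0 < τ)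
    (hC : 0 < C₅) (hβ : 0 < β) (hE : 0 < E) (hκ₁ : 0 ≤ κ₁)
    (hEβ : E * β < 2 * κ₂) (hξ : 1 < ξ)
    (φ₅ : ℝ → ℝ → ℝ)
    (hφ : ∀ x y, φ₅ x y = C₅ * (E * |x| ^ (β : ℝ) - y ^ 2 * |x| ^ (β + 1 : ℝ))) :
    (∀ x y : ℝ, x ≤ -1 → |y| ≤ ξ⁻¹ * Real.sqrt (E / |x|) →
      E * (1 - ξ⁻¹ ^ 2) * |x| ^ (β : ℝ) ≤ E * |x| ^ (β : ℝ) - y ^ 2 * |x| ^ (β + 1 : ℝ) ∧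
      0 < E * (1 - ξ⁻¹ ^ 2) * |x| ^ (β : ℝ) ∧ 0 ≤ φ₅ x y) ∧
    (∀ K : ℝ, ∃ R : ℝ, ∀ x y : ℝ, x ≤ -1 → |y| ≤ ξ⁻¹ * Real.sqrt (E / |x|) →
      R ≤ |x| → K ≤ φ₅ x y) ∧
    (∃ R : ℝ, 0 < R ∧ ∃ c : ℝ, 0 < c ∧ ∀ x y : ℝ, x ≤ -1 →
      |y| ≤ ξ⁻¹ * Real.sqrt (E / |x|) → R ^ 2 ≤ x ^ 2 + y ^ 2 →
      τ * Mop τ a₁ a₂ κ₁ κ₂ φ₅ x y ≤ -c * |x| ^ (β + 1 : ℝ)) ∧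
    (∀ K : ℝ, ∃ R : ℝ, ∀ x y : ℝ, x ≤ -1 → |y| ≤ ξ⁻¹ * Real.sqrt (E / |x|) →
      R ≤ x ^ 2 + y ^ 2 → Mop τ a₁ a₂ κ₁ κ₂ φ₅ x y ≤ K) := by
  obtain rfl : φ₅ = phi5 C₅ β E := funext₂ hφ
  have hξ₂ : ξ⁻¹ ^ 2 < 1 := pow_lt_one₀ (by positivity) (inv_lt_one_of_one_lt₀ hξ) two_ne_zero
  have hm : 0 < E * (1 - ξ⁻¹ ^ 2) := mul_pos hE (by linarith)
  have hX (x y : ℝ) (hx : x ≤ -1) (hy : |y| ≤ ξ⁻¹ * √(E / |x|)) : y ^ 2 * |x| ≤ ξ⁻¹ ^ 2 * E :=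
    sq_mul_abs_le_of_abs_le_mul_sqrt hE.le (by linarith) hy
  have hXE (x y : ℝ) (hx : x ≤ -1) (hy : |y| ≤ ξ⁻¹ * √(E / |x|)) : y ^ 2 * |x| ≤ E := by
    nlinarith [hX x y hx hy]
  have hlow (x y : ℝ) (hx : x ≤ -1) (hy : |y| ≤ ξ⁻¹ * √(E / |x|)) :
      C₅ * (E * (1 - ξ⁻¹ ^ 2)) * |x| ^ β ≤ phi5 C₅ β E x y := by
    rw [mul_assoc, phi5]
    exact mul_le_mul_of_nonneg_left (mul_one_sub_mul_rpow_le (by linarith) (hX x y hx hy)) hC.le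
  obtain ⟨R, hR, c, hc, hM⟩ :=
    exists_tau_mul_Mop_phi5_le (a₁ := a₁) (a₂ := a₂) hτ.ne' hC hβ hE hκ₁ hEβ
  refine ⟨fun x y hx hy => ⟨mul_one_sub_mul_rpow_le (by linarith) (hX x y hx hy), ?_, ?_⟩,
    fun K => ?_, ⟨R, hR, c, hc, fun x y hx hy => hM x y hx (hXE x y hx hy)⟩, fun K => ?_⟩
  · exact mul_pos hm (rpow_pos_of_pos (abs_pos.2 (by linarith : x < 0).ne) β)
  · exact (hlow x y hx hy).trans' (by positivity)
  · obtain ⟨R', hR'⟩ := eventually_atTop.1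
      ((tendsto_rpow_atTop hβ).eventually_ge_atTop (K / (C₅ * (E * (1 - ξ⁻¹ ^ 2)))))
    exact ⟨R', fun x y hx hy hx' =>
      ((div_le_iff₀' (by positivity)).1 (hR' _ hx')).trans (hlow x y hx hy)⟩
  · obtain ⟨R', hR'⟩ := exists_forall_le_of_mul_le_neg_rpow hτ hc hβ.le hM K
    exact ⟨R', fun x y hx hy => hR' x y hx (hXE x y hx hy)⟩

/-- the Lyapunov function `φ₅(x,y) = C₅(E|x|^β − y²|x|^{β+1})` on
`X₅ = {x ≤ −1, |y| ≤ ξ⁻¹ √(E/|x|)}`: nonnegative (indeed bounded below by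
`E(1−ξ⁻²)|x|^β > 0` there), tends to `∞` as `|x| → ∞` in `X₅`, and
`τ Mφ₅ ≤ −c |x|^{β+1}` for `x²+y²` large in `X₅`; in particular `Mφ₅ → −∞`. -/
theorem LF5 (τ C₅ β E ξ a₁ a₂ κ₁ κ₂ : ℝ) (hτ : 0 < τ)
    (hC : 0 < C₅) (hβ : 0 < β) (hE : 0 < E) (hκ₁ : 0 ≤ κ₁) (hκ₂ : 0 < κ₂)
    (hEβ : E * β < 2 * κ₂) (hξ : 1 < ξ)
    (φ₅ : ℝ → ℝ → ℝ)
    (hφ : ∀ x y, φ₅ x y = C₅ * (E * |x| ^ (β : ℝ) - y ^ 2 * |x| ^ (β + 1 : ℝ))) :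
    (∀ x y : ℝ, x ≤ -1 → |y| ≤ ξ⁻¹ * Real.sqrt (E / |x|) →
      E * (1 - ξ⁻¹ ^ 2) * |x| ^ (β : ℝ) ≤ E * |x| ^ (β : ℝ) - y ^ 2 * |x| ^ (β + 1 : ℝ) ∧
      0 < E * (1 - ξ⁻¹ ^ 2) * |x| ^ (β : ℝ) ∧ 0 ≤ φ₅ x y) ∧
    (∀ K : ℝ, ∃ R : ℝ, ∀ x y : ℝ, x ≤ -1 → |y| ≤ ξ⁻¹ * Real.sqrt (E / |x|) →
      R ≤ |x| → K ≤ φ₅ x y) ∧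
    (∃ R : ℝ, 0 < R ∧ ∃ c : ℝ, 0 < c ∧ ∀ x y : ℝ, x ≤ -1 →
      |y| ≤ ξ⁻¹ * Real.sqrt (E / |x|) → R ^ 2 ≤ x ^ 2 + y ^ 2 →
      τ * Mop τ a₁ a₂ κ₁ κ₂ φ₅ x y ≤ -c * |x| ^ (β + 1 : ℝ)) ∧
    (∀ K : ℝ, ∃ R : ℝ, ∀ x y : ℝ, x ≤ -1 → |y| ≤ ξ⁻¹ * Real.sqrt (E / |x|) →
      R ≤ x ^ 2 + y ^ 2 → Mop τ a₁ a₂ κ₁ κ₂ φ₅ x y ≤ K) :=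
  LF5_general τ C₅ β E ξ a₁ a₂ κ₁ κ₂ hτ hC hβ hE hκ₁ hEβ hξ φ₅ hφ
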